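/- arXiv:2201.05231 — 3 statements merged into one kernel-verified Lean document; each statement's English description precedes it below -/
import Mathlib

section
/- Consider the Poisson hapax model with current-round factor α > 0 and remaining potential R. Then for every δ ∈ (0,1), P( R < E[R] − sqrt( α² Λ ln(1/δ) / A ) ) ≤ δ. -/
/-!
Write `R = ∑ⱼ Yⱼ` with `Yⱼ = α λⱼ 1_{Eⱼ}`, where `Eⱼ = {N_{s,j} = 0 for all s}`. The events `Eⱼ`
are built from disjoint blocks of the independent family `N`, so they are independent, and
`P(Eⱼ) = e^{-λⱼ A}`. For a sum of independent nonnegative variables, `e^{-x} ≤ 1 - x + x²/2`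
bounds the moment generating function at negative arguments, and Chernoff's method gives
`P(S ≤ E S - u) ≤ exp(-u² / (2 ∑ⱼ E Yⱼ²))` with no upper bound on the summands needed.
Here `∑ⱼ E Yⱼ² = α² ∑ⱼ λⱼ² e^{-λⱼ A} ≤ α² Λ / (e A)` because `x e^{-x} ≤ e⁻¹`, so for
`u² = α² Λ log(1/δ) / A` the exponent is `e log(1/δ) / 2 ≥ log(1/δ)`.
-/

open MeasureTheory ProbabilityTheory Real

lemma Real.exp_neg_le_one_sub_add_sq_div_two {x : ℝ} (hx : 0 ≤ x) :
    exp (-x) ≤ 1 - x + x ^ 2 / 2 := by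
  let g : ℝ → ℝ := fun z => 1 - z + z ^ 2 / 2 - exp (-z)
  have hg : ∀ z, HasDerivAt g (-1 + z + exp (-z)) z := fun z => by
    refine ((((hasDerivAt_id z).const_sub 1).add ((hasDerivAt_pow 2 z).div_const 2)).sub
      (hasDerivAt_neg z).exp).congr_deriv ?_
    norm_num
  have hmono : MonotoneOn g (Set.Ici 0) :=
    monotoneOn_of_hasDerivWithinAt_nonneg (convex_Ici 0)
      (fun z _ => (hg z).continuousAt.continuousWithinAt)
      (fun z _ => (hg z).hasDerivWithinAt)
      (fun z _ => by linarith [add_one_le_exp (-z)])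
  have := hmono Set.self_mem_Ici hx hx
  norm_num [g] at this
  linarith

lemma Real.sq_mul_exp_neg_mul_le {x a : ℝ} (hx : 0 ≤ x) (ha : 0 < a) :
    x ^ 2 * exp (-(x * a)) ≤ x / (exp 1 * a) := by
  have key := mul_exp_neg_le_exp_neg_one (x * a)
  rw [exp_neg 1] at key
  rw [le_div_iff₀ (by positivity)]
  calc x ^ 2 * exp (-(x * a)) * (exp 1 * a) = x * ((x * a) * exp (-(x * a))) * exp 1 := by ring
    _ ≤ x * (exp 1)⁻¹ * exp 1 := by gcongr
    _ = x := by field_simp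

section LowerTail

variable {Ω ι : Type*} [MeasurableSpace Ω] {μ : Measure Ω} [IsProbabilityMeasure μ]

lemma ProbabilityTheory.mgf_neg_le_exp_of_nonneg {X : Ω → ℝ} (hX0 : 0 ≤ᵐ[μ] X)
    (hX : MemLp X 2 μ) {θ : ℝ} (hθ : 0 ≤ θ) :
    mgf X μ (-θ) ≤ exp (-θ * ∫ ω, X ω ∂μ + θ ^ 2 / 2 * ∫ ω, X ω ^ 2 ∂μ) := by
  have hX1 : Integrable X μ := hX.integrable one_le_two
  have hexp : Integrable (fun ω => exp (-θ * X ω)) μ := by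
    refine (integrable_const 1).mono' (by fun_prop) ?_
    filter_upwards [hX0] with ω hω
    have : 0 ≤ X ω := hω
    rw [norm_of_nonneg (exp_nonneg _), exp_le_one_iff]
    nlinarith
  have hpoly : Integrable (fun ω => 1 - θ * X ω + θ ^ 2 / 2 * X ω ^ 2) μ :=
    ((integrable_const 1).sub (hX1.const_mul θ)).add (hX.integrable_sq.const_mul _)
  calc mgf X μ (-θ) ≤ ∫ ω, (1 - θ * X ω + θ ^ 2 / 2 * X ω ^ 2) ∂μ := by
        refine integral_mono_ae hexp hpoly ?_
        filter_upwards [hX0] with ω hω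
        have := exp_neg_le_one_sub_add_sq_div_two (mul_nonneg hθ hω)
        rw [neg_mul]
        linarith
    _ = -θ * ∫ ω, X ω ∂μ + θ ^ 2 / 2 * ∫ ω, X ω ^ 2 ∂μ + 1 := by
        rw [integral_add (by fun_prop) (hX.integrable_sq.const_mul _), integral_sub (by fun_prop)
          (hX1.const_mul _), integral_const_mul, integral_const_mul]
        simp only [integral_const, probReal_univ, smul_eq_mul, mul_one, neg_mul]
        ring
    _ ≤ _ := add_one_le_exp _

theorem ProbabilityTheory.measureReal_sum_le_integral_sub_le_exp_mul [Fintype ι]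
    {Y : ι → Ω → ℝ} (hindep : iIndepFun Y μ) (hY0 : ∀ i, 0 ≤ᵐ[μ] Y i)
    (hY : ∀ i, MemLp (Y i) 2 μ) {u v θ : ℝ} (hv : ∑ i, ∫ ω, Y i ω ^ 2 ∂μ ≤ v) (hθ : 0 ≤ θ) :
    μ.real {ω | ∑ i, Y i ω ≤ ∫ ω, ∑ i, Y i ω ∂μ - u} ≤ exp (-θ * u + θ ^ 2 / 2 * v) := by
  have hS : (fun ω => ∑ i, Y i ω) = ∑ i, Y i := (Finset.sum_fn _ _).symm
  have hint : Integrable (fun ω => exp (-θ * ∑ i, Y i ω)) μ := by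
    refine (integrable_const 1).mono' ?_ ?_
    · have := fun i => (hY i).aestronglyMeasurable.aemeasurable
      fun_prop
    · filter_upwards [ae_all_iff.2 hY0] with ω hω
      rw [norm_of_nonneg (exp_nonneg _), exp_le_one_iff]
      nlinarith [Finset.sum_nonneg fun i (_ : i ∈ Finset.univ) => hω i]
  calc μ.real {ω | ∑ i, Y i ω ≤ ∫ ω, ∑ i, Y i ω ∂μ - u}
      ≤ exp (θ * (∫ ω, ∑ i, Y i ω ∂μ - u)) * ∏ i, mgf (Y i) μ (-θ) := by
        have := measure_le_le_exp_mul_mgf (∫ ω, ∑ i, Y i ω ∂μ - u) (neg_nonpos.2 hθ) hint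
        rwa [neg_neg, hS, hindep.mgf_sum₀ (fun i => (hY i).aestronglyMeasurable.aemeasurable),
          ← hS] at this
    _ ≤ exp (θ * (∫ ω, ∑ i, Y i ω ∂μ - u)) *
          ∏ i, exp (-θ * ∫ ω, Y i ω ∂μ + θ ^ 2 / 2 * ∫ ω, Y i ω ^ 2 ∂μ) := by
        gcongr with i
        · exact fun i _ => mgf_nonneg
        · exact mgf_neg_le_exp_of_nonneg (hY0 i) (hY i) hθ
    _ = exp (-θ * u + θ ^ 2 / 2 * ∑ i, ∫ ω, Y i ω ^ 2 ∂μ) := by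
        rw [← exp_sum, ← exp_add, integral_finsetSum _ fun i _ => (hY i).integrable one_le_two,
          Finset.sum_add_distrib, ← Finset.mul_sum, ← Finset.mul_sum]
        ring_nf
    _ ≤ exp (-θ * u + θ ^ 2 / 2 * v) := by gcongr

theorem ProbabilityTheory.measureReal_sum_le_integral_sub_le [Fintype ι]
    {Y : ι → Ω → ℝ} (hindep : iIndepFun Y μ) (hY0 : ∀ i, 0 ≤ᵐ[μ] Y i)
    (hY : ∀ i, MemLp (Y i) 2 μ) {u v : ℝ} (hu : 0 ≤ u) (hv : ∑ i, ∫ ω, Y i ω ^ 2 ∂μ ≤ v) :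
    μ.real {ω | ∑ i, Y i ω ≤ ∫ ω, ∑ i, Y i ω ∂μ - u} ≤ exp (-(u ^ 2 / (2 * v))) := by
  have hv0 : 0 ≤ v := (Finset.sum_nonneg fun i _ => integral_nonneg fun ω => sq_nonneg _).trans hv
  rcases hv0.eq_or_lt with rfl | hv0
  · simp
  convert measureReal_sum_le_integral_sub_le_exp_mul hindep hY0 hY hv (div_nonneg hu hv0.le)
    using 2
  field_simp
  ring

end LowerTail

section Blocks

variable {Ω κ ι β : Type*} [MeasurableSpace Ω] {μ : Measure Ω} [MeasurableSpace β] [Fintype κ]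
  {X : κ → ι → Ω → β}

lemma ProbabilityTheory.iIndepFun.measure_biInter_iInter_preimage
    (hX : iIndepFun (fun q : κ × ι => X q.1 q.2) μ) {B : κ → ι → Set β}
    (hB : ∀ s j, MeasurableSet (B s j)) (S : Finset ι) :
    μ (⋂ j ∈ S, ⋂ s, X s j ⁻¹' B s j) = ∏ j ∈ S, ∏ s, μ (X s j ⁻¹' B s j) := by
  have hblocks : ⋂ j ∈ S, ⋂ s, X s j ⁻¹' B s j =
      ⋂ q ∈ (Finset.univ ×ˢ S : Finset (κ × ι)), X q.1 q.2 ⁻¹' B q.1 q.2 := by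
    ext ω
    simp only [Set.mem_iInter, Finset.mem_product, Finset.mem_univ, true_and, Prod.forall]
    exact ⟨fun h s j hj => h j hj s, fun h j hj s => h s j hj⟩
  rw [hblocks, hX.measure_inter_preimage_eq_mul _ fun q _ => hB q.1 q.2, Finset.prod_product,
    Finset.prod_comm]

lemma ProbabilityTheory.iIndepFun.measure_iInter_preimage
    (hX : iIndepFun (fun q : κ × ι => X q.1 q.2) μ) {B : κ → ι → Set β}
    (hB : ∀ s j, MeasurableSet (B s j)) (j : ι) :
    μ (⋂ s, X s j ⁻¹' B s j) = ∏ s, μ (X s j ⁻¹' B s j) := by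
  simpa using hX.measure_biInter_iInter_preimage hB {j}

lemma ProbabilityTheory.iIndepFun.iIndepSet_iInter_preimage
    (hX : iIndepFun (fun q : κ × ι => X q.1 q.2) μ) (hXm : ∀ s j, Measurable (X s j))
    {B : κ → ι → Set β} (hB : ∀ s j, MeasurableSet (B s j)) :
    iIndepSet (fun j => ⋂ s, X s j ⁻¹' B s j) μ := by
  refine (iIndepSet_iff_meas_biInter fun j => .iInter fun s => hXm s j (hB s j)).2 fun S => ?_
  simp_rw [hX.measure_biInter_iInter_preimage hB, hX.measure_iInter_preimage hB]

end Blocks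

lemma ProbabilityTheory.iIndepSet.iIndepFun_indicator_const {Ω ι : Type*} [MeasurableSpace Ω]
    {μ : Measure Ω} {E : ι → Set Ω} (hE : iIndepSet E μ) (c : ι → ℝ) :
    iIndepFun (fun j => (E j).indicator fun _ => c j) μ := by
  convert hE.iIndepFun_indicator.comp (fun j x => c j * x) fun j => measurable_const_mul _
    using 1
  funext j ω
  by_cases h : ω ∈ E j <;> simp [h]

lemma ProbabilityTheory.measure_preimage_zero_of_map_eq_poissonMeasure {Ω : Type*}
    [MeasurableSpace Ω] {μ : Measure Ω} {X : Ω → ℕ} (hX : Measurable X) {r : ℝ} (hr : 0 ≤ r)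
    (h : μ.map X = poissonMeasure r.toNNReal) :
    μ (X ⁻¹' {0}) = ENNReal.ofReal (exp (-r)) := by
  rw [← Measure.map_apply hX (measurableSet_singleton 0), h, poissonMeasure_singleton]
  simp [Real.coe_toNNReal _ hr]

lemma MeasureTheory.measure_setOf_lt_integral_sub_eq_zero {Ω : Type*} [MeasurableSpace Ω]
    {μ : Measure Ω} [IsProbabilityMeasure μ] {R : Ω → ℝ} {c r : ℝ} (hR : ∀ ω, R ω = c)
    (hr : 0 ≤ r) : μ {ω | R ω < ∫ ω', R ω' ∂μ - r} = 0 := by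
  have hempty : {ω | R ω < ∫ ω', R ω' ∂μ - r} = ∅ := by
    ext ω
    simp only [hR, integral_const, probReal_univ, one_smul]
    simpa using hr
  rw [hempty, measure_empty]

theorem ProbabilityTheory.measure_sum_indicator_lt_integral_sub_le_exp_neg {Ω J : Type*}
    [MeasurableSpace Ω] {μ : Measure Ω} [IsProbabilityMeasure μ] [Fintype J] [Nonempty J]
    {E : J → Set Ω} (hE : iIndepSet E μ) (hEm : ∀ j, MeasurableSet (E j)) {lam : J → ℝ}
    (hlam : ∀ j, 0 < lam j) {A : ℝ} (hA : 0 < A)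
    (hμE : ∀ j, μ (E j) = ENNReal.ofReal (exp (-(lam j * A)))) {α L : ℝ} (hα : 0 < α)
    (hL : 0 ≤ L) :
    μ {ω | ∑ j, (E j).indicator (fun _ => α * lam j) ω <
        ∫ ω, ∑ j, (E j).indicator (fun _ => α * lam j) ω ∂μ -
          sqrt (α ^ 2 * (∑ j, lam j) * L / A)} ≤ ENNReal.ofReal (exp (-L)) := by
  set Y := fun j => (E j).indicator fun _ => α * lam j
  set Λ := ∑ j, lam j
  have hΛ : 0 < Λ := Finset.sum_pos (fun j _ => hlam j) Finset.univ_nonempty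
  have hY0 j : 0 ≤ᵐ[μ] Y j :=
    .of_forall fun ω => Set.indicator_nonneg (fun _ _ => (mul_pos hα (hlam j)).le) ω
  have hY2 j : MemLp (Y j) 2 μ := memLp_indicator_const 2 (hEm j) _ (.inr (measure_ne_top μ _))
  have hv : ∑ j, ∫ ω, Y j ω ^ 2 ∂μ ≤ α ^ 2 * Λ / (exp 1 * A) := by
    have hYsq j : (fun ω => Y j ω ^ 2) = (E j).indicator fun _ => (α * lam j) ^ 2 := by
      ext ω
      by_cases h : ω ∈ E j <;> simp [Y, h]
    simp_rw [hYsq, integral_indicator_const _ (hEm _), measureReal_def, hμE,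
      ENNReal.toReal_ofReal (exp_pos _).le, smul_eq_mul, Λ, Finset.mul_sum, Finset.sum_div]
    gcongr with j
    calc _ = α ^ 2 * (lam j ^ 2 * exp (-(lam j * A))) := by ring
      _ ≤ α ^ 2 * (lam j / (exp 1 * A)) := by gcongr; exact sq_mul_exp_neg_mul_le (hlam j).le hA
      _ = _ := by ring
  have hexponent : exp (-(sqrt (α ^ 2 * Λ * L / A) ^ 2 / (2 * (α ^ 2 * Λ / (exp 1 * A))))) ≤
      exp (-L) := by
    rw [sq_sqrt (by positivity)]
    calc _ = exp (-(exp 1 / 2 * L)) := by congr 2; field_simp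
      _ ≤ exp (-L) := by gcongr; nlinarith [add_one_le_exp 1]
  calc _ ≤ μ {ω | ∑ j, Y j ω ≤ ∫ ω, ∑ j, Y j ω ∂μ - sqrt (α ^ 2 * Λ * L / A)} :=
        measure_mono (Set.ofPred_subset_ofPred.2 fun _ => le_of_lt)
    _ = ENNReal.ofReal (μ.real {ω | ∑ j, Y j ω ≤ ∫ ω, ∑ j, Y j ω ∂μ -
          sqrt (α ^ 2 * Λ * L / A)}) := (ofReal_measureReal (measure_ne_top μ _)).symm
    _ ≤ ENNReal.ofReal (exp (-L)) := ENNReal.ofReal_le_ofReal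
        ((measureReal_sum_le_integral_sub_le (hE.iIndepFun_indicator_const _) hY0 hY2
          (sqrt_nonneg _) hv).trans hexponent)

/-- lower-tail concentration of the remaining potential. -/
theorem remaining_potential_lower_tail
    {Ω : Type*} [MeasurableSpace Ω] (μ : Measure Ω) [IsProbabilityMeasure μ]
    {J : Type*} [Fintype J] {m : ℕ}
    (lam : J → ℝ) (hlam : ∀ j, 0 < lam j)
    (alph : Fin m → ℝ) (halph : ∀ s, 0 < alph s)
    (N : Fin m → J → Ω → ℕ)
    (hMeas : ∀ s j, Measurable (N s j))
    (hIndep : iIndepFun (fun q : Fin m × J => N q.1 q.2) μ)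
    (hDist : ∀ s j, μ.map (N s j) = poissonMeasure (lam j * alph s).toNNReal)
    (A Λ : ℝ) (hA : A = ∑ s, alph s) (hΛ : Λ = ∑ j, lam j)
    (α : ℝ) (hα : 0 < α)
    (R : Ω → ℝ)
    (hR : ∀ ω, R ω = α * ∑ j, lam j * (if ∀ s, N s j ω = 0 then (1 : ℝ) else 0))
    (δ : ℝ) (hδ : δ ∈ Set.Ioo (0 : ℝ) 1) :
    μ {ω | R ω < (∫ ω', R ω' ∂μ) - Real.sqrt (α ^ 2 * Λ * Real.log (1 / δ) / A)} ≤
      ENNReal.ofReal δ := by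
  rcases isEmpty_or_nonempty J with hJ | hJ
  · rw [measure_setOf_lt_integral_sub_eq_zero (R := R) (c := 0) (by simp [hR]) (sqrt_nonneg _)]
    exact zero_le
  rcases isEmpty_or_nonempty (Fin m) with hm | hm
  · rw [measure_setOf_lt_integral_sub_eq_zero (R := R) (c := α * Λ) (by simp [hR, hΛ])
      (sqrt_nonneg _)]
    exact zero_le
  let E j := ⋂ s, N s j ⁻¹' {0}
  have hμE j : μ (E j) = ENNReal.ofReal (exp (-(lam j * A))) := by
    rw [hIndep.measure_iInter_preimage (fun _ _ => .singleton 0), Finset.prod_congr rfl fun s _ =>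
      measure_preimage_zero_of_map_eq_poissonMeasure (hMeas s j)
        (mul_pos (hlam j) (halph s)).le (hDist s j),
      ← ENNReal.ofReal_prod_of_nonneg fun _ _ => (exp_pos _).le, ← exp_sum, hA, Finset.mul_sum,
      Finset.sum_neg_distrib]
  have hRE : R = fun ω => ∑ j, (E j).indicator (fun _ => α * lam j) ω := by
    ext ω
    rw [hR, Finset.mul_sum]
    refine Finset.sum_congr rfl fun j _ => ?_
    by_cases h : ∀ s, N s j ω = 0 <;> simp [E, h]
  have htail := measure_sum_indicator_lt_integral_sub_le_exp_neg
    (hIndep.iIndepSet_iInter_preimage hMeas fun _ _ => .singleton 0)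
    (fun j => .iInter fun s => hMeas s j (.singleton 0)) hlam
    (hA ▸ Finset.sum_pos (fun s _ => halph s) Finset.univ_nonempty) hμE hα
    (log_nonneg (one_le_one_div hδ.1 hδ.2.le))
  rw [hRE, hΛ]
  refine htail.trans_eq ?_
  rw [one_div, log_inv, neg_neg, exp_log hδ.1]
end

section
/- Consider the Poisson hapax model with current-round factor α > 0, remaining potential R, nonnegative weights a_1,…,a_m, and Good–Turing statistic G. Then E[R] = α · Σ_{j∈J} λ_j exp(−λ_j A), E[G] = (Σ_{s=1}^m a_s α_s) · Σ_{j∈J} λ_j exp(−λ_j A), and consequently E[R] − E[G] = ( α − Σ_{s=1}^m a_s α_s ) · Σ_{j∈J} λ_j exp(−λ_j A). -/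
/-!
By linearity of expectation both expectations reduce to probabilities of count patterns at a
single node `j`. Its counts `N_{1,j}, …, N_{m,j}` are independent Poisson variables, so the empty
pattern has probability `∏ₛ e^{-λⱼ αₛ} = e^{-λⱼ A}` and the hapax pattern at round `s` has
probability `λⱼ αₛ e^{-λⱼ A}`; weighting and summing gives both formulas, and the bias identity
is their difference.
-/

open MeasureTheory ProbabilityTheory Real NNReal Nat Finset

section IndependentCounts

variable {Ω κ β : Type*}

lemma setOf_hapax_eq [DecidableEq κ] (N : κ → Ω → ℕ) (s : κ) :
    {ω | N s ω = 1 ∧ ∀ l, l ≠ s → N l ω = 0} =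
      {ω | ∀ l, N l ω = (Pi.single s 1 : κ → ℕ) l} := by
  ext ω
  simp only [Set.mem_ofPred_eq, ← funext_iff (f := fun l => N l ω), Pi.single,
    eq_comm (a := fun l => N l ω), Function.update_eq_iff, Pi.zero_apply]
  simp_rw [eq_comm]

variable [MeasurableSpace Ω] {μ : Measure Ω}

lemma measurableSet_setOf_forall_eq [Countable κ] [MeasurableSpace β]
    [MeasurableSingletonClass β] {N : κ → Ω → β} (hN : ∀ l, Measurable (N l)) (k : κ → β) :
    MeasurableSet {ω | ∀ l, N l ω = k l} :=
  measurableSet_setOfPred.2 <| Measurable.forall fun l =>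
    measurableSet_setOfPred.1 <| hN l (measurableSet_singleton (k l))

lemma ProbabilityTheory.iIndepFun.measureReal_setOf_forall_eq [Fintype κ] [MeasurableSpace β]
    [MeasurableSingletonClass β] {N : κ → Ω → β} {ν : κ → Measure β} (hind : iIndepFun N μ)
    (hN : ∀ l, Measurable (N l)) (hmap : ∀ l, μ.map (N l) = ν l) (k : κ → β) :
    μ.real {ω | ∀ l, N l ω = k l} = ∏ l, (ν l).real {k l} := by
  have hset : {ω | ∀ l, N l ω = k l} = ⋂ l, N l ⁻¹' {k l} := by ext; simp
  rw [hset, measureReal_def,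
    hind.meas_iInter fun l => ⟨{k l}, measurableSet_singleton _, rfl⟩, ENNReal.toReal_prod]
  simp_rw [← measureReal_def, ← hmap, map_measureReal_apply (hN _) (measurableSet_singleton _)]

lemma prod_poissonMeasure_real_singleton [Fintype κ] (r : κ → ℝ≥0) (k : κ → ℕ) :
    ∏ l, (poissonMeasure (r l)).real {k l} =
      (∏ l, (r l : ℝ) ^ k l / (k l)!) * exp (-∑ l, (r l : ℝ)) := by
  simp_rw [poissonMeasure_real_singleton, ← sum_neg_distrib, exp_sum, ← prod_mul_distrib]
  exact prod_congr rfl fun l _ => by ring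

variable [Fintype κ] {N : κ → Ω → ℕ} {r : κ → ℝ≥0}

lemma ProbabilityTheory.iIndepFun.measureReal_forall_eq_zero_of_poisson (hind : iIndepFun N μ)
    (hN : ∀ l, Measurable (N l)) (hmap : ∀ l, μ.map (N l) = poissonMeasure (r l)) :
    μ.real {ω | ∀ l, N l ω = 0} = exp (-∑ l, (r l : ℝ)) := by
  rw [hind.measureReal_setOf_forall_eq hN hmap fun _ => 0, prod_poissonMeasure_real_singleton]
  simp

lemma ProbabilityTheory.iIndepFun.measureReal_hapax_of_poisson [DecidableEq κ]
    (hind : iIndepFun N μ) (hN : ∀ l, Measurable (N l))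
    (hmap : ∀ l, μ.map (N l) = poissonMeasure (r l)) (s : κ) :
    μ.real {ω | N s ω = 1 ∧ ∀ l, l ≠ s → N l ω = 0} = r s * exp (-∑ l, (r l : ℝ)) := by
  rw [setOf_hapax_eq, hind.measureReal_setOf_forall_eq hN hmap,
    prod_poissonMeasure_real_singleton, Fintype.prod_eq_single s fun l hl => by simp [hl]]
  simp

lemma integral_sum_mul_ite_one_zero [IsFiniteMeasure μ] {ι : Type*} [Fintype ι] (c : ι → ℝ)
    (p : ι → Ω → Prop) [∀ i, DecidablePred (p i)] (hp : ∀ i, MeasurableSet {ω | p i ω}) :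
    ∫ ω, ∑ i, c i * (if p i ω then (1 : ℝ) else 0) ∂μ = ∑ i, c i * μ.real {ω | p i ω} := by
  have hind : ∀ i, (fun ω => c i * (if p i ω then (1 : ℝ) else 0)) =
      {ω | p i ω}.indicator fun _ => c i := by
    intro i; ext ω; by_cases h : p i ω <;> simp [h]
  rw [integral_finsetSum _ fun i _ => by rw [hind]; exact (integrable_const _).indicator (hp i)]
  refine sum_congr rfl fun i _ => ?_
  rw [hind, integral_indicator_const _ (hp i), smul_eq_mul, mul_comm]

end IndependentCounts

theorem good_turing_bias_general
    {Ω : Type*} [MeasurableSpace Ω] (μ : Measure Ω) [IsProbabilityMeasure μ]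
    {J : Type*} [Fintype J] {m : ℕ}
    (lam : J → ℝ) (hlam : ∀ j, 0 < lam j)
    (alph : Fin m → ℝ) (halph : ∀ s, 0 < alph s)
    (N : Fin m → J → Ω → ℕ)
    (hMeas : ∀ s j, Measurable (N s j))
    (hIndep : iIndepFun (fun q : Fin m × J => N q.1 q.2) μ)
    (hDist : ∀ s j, μ.map (N s j) = poissonMeasure (lam j * alph s).toNNReal)
    (A : ℝ) (hA : A = ∑ s, alph s)
    (α : ℝ)
    (R : Ω → ℝ)
    (hR : ∀ ω, R ω = α * ∑ j, lam j * (if ∀ s, N s j ω = 0 then (1 : ℝ) else 0))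
    (a : Fin m → ℝ)
    (G : Ω → ℝ)
    (hG : ∀ ω, G ω = ∑ j, ∑ s,
      a s * (if N s j ω = 1 ∧ ∀ l, l ≠ s → N l j ω = 0 then (1 : ℝ) else 0)) :
    (∫ ω, R ω ∂μ = α * ∑ j, lam j * exp (-(lam j) * A)) ∧
    (∫ ω, G ω ∂μ = (∑ s, a s * alph s) * ∑ j, lam j * exp (-(lam j) * A)) ∧
    ((∫ ω, R ω ∂μ) - ∫ ω, G ω ∂μ =
      (α - ∑ s, a s * alph s) * ∑ j, lam j * exp (-(lam j) * A)) := by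
  have hcol : ∀ j, iIndepFun (fun s => N s j) μ := fun j =>
    hIndep.precomp (g := fun s => (s, j)) fun s t h => congrArg Prod.fst h
  have hrate : ∀ j s, ((lam j * alph s).toNNReal : ℝ) = lam j * alph s := fun j s =>
    coe_toNNReal _ (mul_pos (hlam j) (halph s)).le
  have hrate_sum : ∀ j, ∑ s, lam j * alph s = lam j * A := by
    simp [hA, mul_sum]
  have hRint : ∫ ω, R ω ∂μ = α * ∑ j, lam j * exp (-(lam j) * A) := by
    simp_rw [hR, integral_const_mul]
    rw [integral_sum_mul_ite_one_zero lam _ fun j =>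
      measurableSet_setOf_forall_eq (hMeas · j) fun _ => 0]
    simp only [(hcol _).measureReal_forall_eq_zero_of_poisson (hMeas · _) (hDist · _), hrate,
      hrate_sum, neg_mul]
  have hGint : ∫ ω, G ω ∂μ = (∑ s, a s * alph s) * ∑ j, lam j * exp (-(lam j) * A) := by
    simp_rw [hG, ← Fintype.sum_prod_type']
    rw [integral_sum_mul_ite_one_zero (fun q : J × Fin m => a q.2) _ fun q => by
      rw [setOf_hapax_eq (N · q.1)]; exact measurableSet_setOf_forall_eq (hMeas · q.1) _]
    simp only [(hcol _).measureReal_hapax_of_poisson (hMeas · _) (hDist · _), hrate,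
      hrate_sum, neg_mul]
    rw [Fintype.sum_prod_type, sum_mul_sum, sum_comm]
    exact sum_congr rfl fun j _ => sum_congr rfl fun s _ => by ring
  exact ⟨hRint, hGint, by rw [hRint, hGint]; ring⟩

/-- expectations of the remaining potential and the Good–Turing statistic,
and the bias identity. -/
theorem good_turing_bias
    {Ω : Type*} [MeasurableSpace Ω] (μ : Measure Ω) [IsProbabilityMeasure μ]
    {J : Type*} [Fintype J] {m : ℕ}
    (lam : J → ℝ) (hlam : ∀ j, 0 < lam j)
    (alph : Fin m → ℝ) (halph : ∀ s, 0 < alph s)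
    (N : Fin m → J → Ω → ℕ)
    (hMeas : ∀ s j, Measurable (N s j))
    (hIndep : iIndepFun (fun q : Fin m × J => N q.1 q.2) μ)
    (hDist : ∀ s j, μ.map (N s j) = poissonMeasure (lam j * alph s).toNNReal)
    (A Λ : ℝ) (hA : A = ∑ s, alph s) (hΛ : Λ = ∑ j, lam j)
    (α : ℝ) (hα : 0 < α)
    (R : Ω → ℝ)
    (hR : ∀ ω, R ω = α * ∑ j, lam j * (if ∀ s, N s j ω = 0 then (1 : ℝ) else 0))
    (a : Fin m → ℝ) (ha : ∀ s, 0 ≤ a s)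
    (G : Ω → ℝ)
    (hG : ∀ ω, G ω = ∑ j, ∑ s,
      a s * (if N s j ω = 1 ∧ ∀ l, l ≠ s → N l j ω = 0 then (1 : ℝ) else 0)) :
    (∫ ω, R ω ∂μ = α * ∑ j, lam j * exp (-(lam j) * A)) ∧
    (∫ ω, G ω ∂μ = (∑ s, a s * alph s) * ∑ j, lam j * exp (-(lam j) * A)) ∧
    ((∫ ω, R ω ∂μ) - ∫ ω, G ω ∂μ =
      (α - ∑ s, a s * alph s) * ∑ j, lam j * exp (-(lam j) * A)) :=
  good_turing_bias_general μ lam hlam alph halph N hMeas hIndep hDist A hA α R hR a G hG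
end

section
/- Consider the Poisson hapax model with nonnegative weights a_1,…,a_m and Good–Turing statistic G = Σ_{j∈J} X_j, where X_j = Σ_{s=1}^m a_s · 1_{H_{s,j}}. Set b = Σ_{s=1}^m a_s and v = (Σ_{s=1}^m a_s² α_s) · Λ. Then the random variables (X_j)_{j∈J} are mutually independent, each satisfies 0 ≤ X_j ≤ b almost surely and Σ_{j∈J} E[X_j²] ≤ v, and for every δ ∈ (0,1), P( G − E[G] > sqrt(2 v ln(1/δ)) + (b/3) ln(1/δ) ) ≤ δ. -/
open MeasureTheory ProbabilityTheory Real
open scoped NNReal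

/-!
Each `X j` is a fixed function of the column `(N s j)ₛ`, and grouping an independent family
into disjoint blocks keeps it independent. For a fixed node at most one hapax event occurs, so
`X j ^ 2` is the same statistic with weights `a s ^ 2`, and
`P(H s j) ≤ P(N s j = 1) = λⱼ αₛ e^{-λⱼ αₛ} ≤ λⱼ αₛ`.

The tail bound is Bernstein's inequality. Comparing the exponential series with a geometric one
(`(n + 2)! ≥ 2 · 3ⁿ`) gives `e^{θx} ≤ 1 + θx + x² θ² / (2 (1 - θb/3))` for `0 ≤ x ≤ b`,
`0 ≤ θb < 3`, hence `E e^{θ(G - E G)} ≤ exp (v θ² / (2 (1 - θb/3)))` by independence, and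
Chernoff's bound at `θ = 2t / (√(2vt) + 2bt/3)` is exactly `e^{-t}`.
-/

lemma ProbabilityTheory.iIndepFun.curry {Ω ι κ 𝓧 : Type*} [MeasurableSpace Ω]
    [MeasurableSpace 𝓧] {P : Measure Ω} {X : ι → κ → Ω → 𝓧} (mX : ∀ i j, Measurable (X i j))
    (h : iIndepFun (fun p : ι × κ => X p.1 p.2) P) :
    iIndepFun (fun i ω j => X i j ω) P := by
  have := h.isProbabilityMeasure
  have (i : ι) (j : κ) : IsProbabilityMeasure (P.map (X i j)) :=
    Measure.isProbabilityMeasure_map (mX i j).aemeasurable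
  have hrow (i : ι) : iIndepFun (X i) P := h.precomp (g := Prod.mk i) (Prod.mk_right_injective i)
  rw [iIndepFun_iff_map_fun_eq_infinitePi_map fun i => measurable_pi_lambda _ (mX i)]
  calc P.map (fun ω i j => X i j ω)
      = (P.map fun ω p => X p.1 p.2 ω).map (MeasurableEquiv.curry ι κ 𝓧) := by
        rw [Measure.map_map (MeasurableEquiv.curry ι κ 𝓧).measurable
          (measurable_pi_lambda _ fun p : ι × κ => mX p.1 p.2)]
        rfl
    _ = Measure.infinitePi fun i => Measure.infinitePi fun j => P.map (X i j) := by
        rw [h.map_fun_eq_infinitePi_map fun p : ι × κ => mX p.1 p.2]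
        exact Measure.infinitePi_map_curry fun i j => P.map (X i j)
    _ = Measure.infinitePi fun i => P.map fun ω j => X i j ω := by
        simp_rw [(hrow _).map_fun_eq_infinitePi_map (mX _)]

lemma two_mul_three_pow_le_factorial (n : ℕ) : 2 * 3 ^ n ≤ (n + 2).factorial := by
  induction n with
  | zero => simp [Nat.factorial]
  | succ n ih =>
    rw [Nat.factorial_succ, pow_succ]
    nlinarith

lemma exp_le_one_add_add_sq_div {u : ℝ} (hu : 0 ≤ u) (hu3 : u < 3) :
    exp u ≤ 1 + u + u ^ 2 / (2 * (1 - u / 3)) := by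
  have hexp : HasSum (fun n => u ^ n / n.factorial) (exp u) := by
    simpa [Real.exp_eq_exp_ℝ] using NormedSpace.expSeries_div_hasSum_exp u
  have htail := (hasSum_nat_add_iff' 2).mpr hexp
  have hgeom := (hasSum_geometric_of_lt_one (by positivity) (by linarith : u / 3 < 1)).mul_left
    (u ^ 2 / 2)
  have hterm (n : ℕ) : u ^ (n + 2) / (n + 2).factorial ≤ u ^ 2 / 2 * (u / 3) ^ n := by
    have hfac : (2 * 3 ^ n : ℝ) ≤ (n + 2).factorial := by
      exact_mod_cast two_mul_three_pow_le_factorial n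
    calc u ^ (n + 2) / (n + 2).factorial ≤ u ^ (n + 2) / (2 * 3 ^ n) := by gcongr
      _ = u ^ 2 / 2 * (u / 3) ^ n := by rw [div_pow]; field_simp; ring
  have htail_le := hasSum_le hterm htail hgeom
  simp only [Finset.sum_range_succ, Finset.sum_range_zero, pow_zero, pow_one,
    Nat.factorial_zero, Nat.factorial_one, Nat.cast_one, div_one, zero_add] at htail_le
  rw [← div_div, div_eq_mul_inv _ (1 - u / 3)]
  linarith

lemma exp_mul_le_one_add_add_sq_mul {t b x : ℝ} (ht : 0 ≤ t) (htb : t * b < 3) (hx0 : 0 ≤ x)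
    (hxb : x ≤ b) :
    exp (t * x) ≤ 1 + t * x + x ^ 2 * (t ^ 2 / (2 * (1 - t * b / 3))) := by
  have htx : t * x ≤ t * b := mul_le_mul_of_nonneg_left hxb ht
  calc exp (t * x) ≤ 1 + t * x + (t * x) ^ 2 / (2 * (1 - t * x / 3)) :=
        exp_le_one_add_add_sq_div (mul_nonneg ht hx0) (htx.trans_lt htb)
    _ ≤ 1 + t * x + (t * x) ^ 2 / (2 * (1 - t * b / 3)) := by gcongr; linarith
    _ = 1 + t * x + x ^ 2 * (t ^ 2 / (2 * (1 - t * b / 3))) := by ring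

section Bernstein

variable {Ω : Type*} [MeasurableSpace Ω] {μ : Measure Ω} [IsProbabilityMeasure μ]

lemma mgf_le_exp_of_ae_mem_Icc {Y : Ω → ℝ} {t b : ℝ} (hY : AEMeasurable Y μ)
    (hb : ∀ᵐ ω ∂μ, 0 ≤ Y ω ∧ Y ω ≤ b) (ht : 0 ≤ t) (htb : t * b < 3) :
    mgf Y μ t ≤
      exp (t * ∫ ω, Y ω ∂μ + (∫ ω, Y ω ^ 2 ∂μ) * (t ^ 2 / (2 * (1 - t * b / 3)))) := by
  set κ := t ^ 2 / (2 * (1 - t * b / 3))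
  have hYint : Integrable Y μ := .of_mem_Icc 0 b hY hb
  have hY2int : Integrable (fun ω => Y ω ^ 2) μ :=
    .of_mem_Icc 0 (b ^ 2) (hY.pow_const 2) <|
      hb.mono fun ω h => ⟨sq_nonneg _, pow_le_pow_left₀ h.1 h.2 2⟩
  have hlin : Integrable (fun ω => 1 + t * Y ω) μ := (integrable_const 1).add (hYint.const_mul t)
  calc mgf Y μ t ≤ ∫ ω, (1 + t * Y ω + Y ω ^ 2 * κ) ∂μ :=
        integral_mono_ae (integrable_exp_mul_of_le t b ht hY (hb.mono fun _ h => h.2))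
          (hlin.add (hY2int.mul_const κ))
          (hb.mono fun ω h => exp_mul_le_one_add_add_sq_mul ht htb h.1 h.2)
    _ = 1 + (t * ∫ ω, Y ω ∂μ + (∫ ω, Y ω ^ 2 ∂μ) * κ) := by
        rw [integral_add hlin (hY2int.mul_const κ),
          integral_add (integrable_const 1) (hYint.const_mul t), integral_const,
          integral_const_mul, integral_mul_const]
        simp only [probReal_univ, smul_eq_mul, one_mul]
        ring
    _ ≤ _ := (add_comm _ _).trans_le (add_one_le_exp _)

variable {ι : Type*} [Fintype ι] {X : ι → Ω → ℝ} {b v : ℝ}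

lemma measureReal_sum_sub_integral_ge_le (hindep : iIndepFun X μ) (hmeas : ∀ i, Measurable (X i))
    (hbound : ∀ i, ∀ᵐ ω ∂μ, 0 ≤ X i ω ∧ X i ω ≤ b) (hvar : ∑ i, ∫ ω, X i ω ^ 2 ∂μ ≤ v)
    {t : ℝ} (ht : 0 ≤ t) (htb : t * b < 3) (ε : ℝ) :
    μ.real {ω | ε ≤ ∑ i, X i ω - ∫ ω', ∑ i, X i ω' ∂μ} ≤
      exp (-t * ε + v * (t ^ 2 / (2 * (1 - t * b / 3)))) := by
  set κ := t ^ 2 / (2 * (1 - t * b / 3))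
  have hκ : 0 ≤ κ := div_nonneg (sq_nonneg t) (by linarith)
  set S : Ω → ℝ := fun ω => ∑ i, X i ω
  have hS : S = ∑ i, X i := funext fun ω => (Finset.sum_apply ..).symm
  have hmgf : mgf S μ t ≤ exp (t * ∫ ω, S ω ∂μ + v * κ) :=
    calc mgf S μ t = ∏ i, mgf (X i) μ t := by rw [hS]; exact hindep.mgf_sum hmeas _
      _ ≤ ∏ i, exp (t * ∫ ω, X i ω ∂μ + (∫ ω, X i ω ^ 2 ∂μ) * κ) :=
        Finset.prod_le_prod (fun _ _ => mgf_nonneg) fun i _ =>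
          mgf_le_exp_of_ae_mem_Icc (hmeas i).aemeasurable (hbound i) ht htb
      _ = exp (t * ∫ ω, S ω ∂μ + (∑ i, ∫ ω, X i ω ^ 2 ∂μ) * κ) := by
        rw [← exp_sum, Finset.sum_add_distrib, ← Finset.mul_sum, ← Finset.sum_mul,
          integral_finsetSum _ fun i _ => .of_mem_Icc 0 b (hmeas i).aemeasurable (hbound i)]
      _ ≤ exp (t * ∫ ω, S ω ∂μ + v * κ) := by gcongr
  have hSint : Integrable (fun ω => exp (t * S ω)) μ := by
    simpa only [hS] using hindep.integrable_exp_mul_sum hmeas fun i _ =>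
      integrable_exp_mul_of_le t b ht (hmeas i).aemeasurable ((hbound i).mono fun _ h => h.2)
  calc μ.real {ω | ε ≤ S ω - ∫ ω', S ω' ∂μ} = μ.real {ω | ε + ∫ ω', S ω' ∂μ ≤ S ω} := by
        simp_rw [le_sub_iff_add_le]
    _ ≤ exp (-t * (ε + ∫ ω', S ω' ∂μ)) * mgf S μ t := measure_ge_le_exp_mul_mgf _ ht hSint
    _ ≤ exp (-t * (ε + ∫ ω', S ω' ∂μ)) * exp (t * ∫ ω, S ω ∂μ + v * κ) := by gcongr
    _ = exp (-t * ε + v * κ) := by rw [← exp_add]; ring_nf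

lemma ae_eq_zero_of_sum_integral_sq_le_zero (hmeas : ∀ i, Measurable (X i))
    (hbound : ∀ i, ∀ᵐ ω ∂μ, 0 ≤ X i ω ∧ X i ω ≤ b) (hvar : ∑ i, ∫ ω, X i ω ^ 2 ∂μ ≤ 0)
    (i : ι) : X i =ᵐ[μ] 0 := by
  have hnonneg (i : ι) : 0 ≤ ∫ ω, X i ω ^ 2 ∂μ := integral_nonneg fun ω => sq_nonneg (X i ω)
  have hzero : ∫ ω, X i ω ^ 2 ∂μ = 0 :=
    (Finset.sum_eq_zero_iff_of_nonneg fun i _ => hnonneg i).1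
      (hvar.antisymm (Finset.sum_nonneg fun i _ => hnonneg i)) i (Finset.mem_univ i)
  have hint : Integrable (fun ω => X i ω ^ 2) μ :=
    .of_mem_Icc 0 (b ^ 2) ((hmeas i).pow_const 2).aemeasurable <|
      (hbound i).mono fun ω h => ⟨sq_nonneg _, pow_le_pow_left₀ h.1 h.2 2⟩
  filter_upwards [(integral_eq_zero_iff_of_nonneg (fun ω => sq_nonneg (X i ω)) hint).1 hzero]
    with ω hω
  exact pow_eq_zero_iff two_ne_zero |>.1 hω

theorem measure_sum_sub_integral_gt_le (hindep : iIndepFun X μ) (hmeas : ∀ i, Measurable (X i))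
    (hb : 0 ≤ b) (hbound : ∀ i, ∀ᵐ ω ∂μ, 0 ≤ X i ω ∧ X i ω ≤ b)
    (hvar : ∑ i, ∫ ω, X i ω ^ 2 ∂μ ≤ v) {t : ℝ} (ht : 0 < t) :
    μ {ω | √(2 * v * t) + b / 3 * t < ∑ i, X i ω - ∫ ω', ∑ i, X i ω' ∂μ} ≤
      ENNReal.ofReal (exp (-t)) := by
  rcases ((Finset.sum_nonneg fun i _ => integral_nonneg fun ω => sq_nonneg (X i ω)).trans
    hvar).eq_or_lt with hv | hv
  · have hS : (fun ω => ∑ i, X i ω) =ᵐ[μ] 0 := by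
      filter_upwards [ae_all_iff.2 (ae_eq_zero_of_sum_integral_sq_le_zero hmeas hbound
        (hv ▸ hvar))] with ω hω
      simp [hω]
    refine le_of_eq_of_le ?_ zero_le
    rw [measure_eq_zero_iff_ae_notMem]
    filter_upwards [hS] with ω hω
    simp only [not_lt, integral_congr_ae hS, hω, Pi.zero_apply, integral_zero, sub_zero]
    positivity
  set r := √(2 * v * t)
  have hr : 0 < r := sqrt_pos.2 (by positivity)
  have hr2 : r ^ 2 = 2 * v * t := sq_sqrt (by positivity)
  have hden : 0 < r + 2 * (b / 3) * t := by positivity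
  set θ := 2 * t / (r + 2 * (b / 3) * t)
  have hθb : θ * b < 3 := by
    rw [div_mul_eq_mul_div, div_lt_iff₀ hden]; nlinarith
  have hexponent : -θ * (r + b / 3 * t) + v * (θ ^ 2 / (2 * (1 - θ * b / 3))) = -t := by
    have h1 : 1 - θ * b / 3 = r / (r + 2 * (b / 3) * t) := by simp only [θ]; field_simp; ring
    rw [h1]
    simp only [θ]
    field_simp
    linear_combination -3 * hr2
  set E := {ω | r + b / 3 * t ≤ ∑ i, X i ω - ∫ ω', ∑ i, X i ω' ∂μ}
  calc μ {ω | r + b / 3 * t < ∑ i, X i ω - ∫ ω', ∑ i, X i ω' ∂μ}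
      ≤ μ E := measure_mono <| Set.ofPred_subset_ofPred.2 fun _ => le_of_lt
    _ = ENNReal.ofReal (μ.real E) := (ENNReal.ofReal_toReal (measure_ne_top _ _)).symm
    _ ≤ ENNReal.ofReal (exp (-t)) := by
        gcongr
        exact hexponent ▸
          measureReal_sum_sub_integral_ge_le hindep hmeas hbound hvar (by positivity) hθb _

end Bernstein

section Hapax

variable {ι : Type*} [Fintype ι] [DecidableEq ι]

def hapaxWeight (a : ι → ℝ) (w : ι → ℕ) : ℝ :=
  ∑ s, a s * if w s = 1 ∧ ∀ l, l ≠ s → w l = 0 then 1 else 0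

lemma hapaxWeight_eq_of_hapax (a : ι → ℝ) {w : ι → ℕ} {s : ι}
    (h : w s = 1 ∧ ∀ l, l ≠ s → w l = 0) : hapaxWeight a w = a s := by
  rw [hapaxWeight, Finset.sum_eq_single s (fun l _ hl => ?_) (by simp), if_pos h, mul_one]
  rw [if_neg fun hl' => by simp [hl'.2 s (Ne.symm hl)] at h, mul_zero]

lemma hapaxWeight_eq_zero (a : ι → ℝ) {w : ι → ℕ}
    (h : ∀ s, ¬(w s = 1 ∧ ∀ l, l ≠ s → w l = 0)) : hapaxWeight a w = 0 :=
  Finset.sum_eq_zero fun s _ => by rw [if_neg (h s), mul_zero]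

lemma hapaxWeight_comp {f : ℝ → ℝ} (hf : f 0 = 0) (a : ι → ℝ) (w : ι → ℕ) :
    hapaxWeight (fun s => f (a s)) w = f (hapaxWeight a w) := by
  by_cases h : ∃ s, w s = 1 ∧ ∀ l, l ≠ s → w l = 0
  · obtain ⟨s, hs⟩ := h
    rw [hapaxWeight_eq_of_hapax _ hs, hapaxWeight_eq_of_hapax _ hs]
  · rw [hapaxWeight_eq_zero _ (not_exists.1 h), hapaxWeight_eq_zero _ (not_exists.1 h), hf]

variable {a : ι → ℝ}

lemma hapaxWeight_nonneg (ha : ∀ s, 0 ≤ a s) (w : ι → ℕ) : 0 ≤ hapaxWeight a w :=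
  Finset.sum_nonneg fun s _ => mul_nonneg (ha s) (by split_ifs <;> norm_num)

lemma hapaxWeight_le_sum (ha : ∀ s, 0 ≤ a s) (w : ι → ℕ) : hapaxWeight a w ≤ ∑ s, a s :=
  Finset.sum_le_sum fun s _ => mul_le_of_le_one_right (ha s) (by split_ifs <;> norm_num)

variable {Ω : Type*} [MeasurableSpace Ω] {μ : Measure Ω} [IsFiniteMeasure μ]

lemma integral_hapaxWeight_le {N : ι → Ω → ℕ} (hN : ∀ s, Measurable (N s))
    (ha : ∀ s, 0 ≤ a s) :
    ∫ ω, hapaxWeight a (fun s => N s ω) ∂μ ≤ ∑ s, a s * μ.real (N s ⁻¹' {1}) := by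
  have hint (s : ι) : Integrable ((N s ⁻¹' {1}).indicator fun _ => a s) μ :=
    (integrable_const (a s)).indicator (hN s (measurableSet_singleton 1))
  have hle (ω : Ω) :
      hapaxWeight a (fun s => N s ω) ≤ ∑ s, (N s ⁻¹' {1}).indicator (fun _ => a s) ω :=
    Finset.sum_le_sum fun s _ => by
      by_cases h : N s ω = 1
      · rw [Set.indicator_of_mem (show ω ∈ N s ⁻¹' {1} from h)]
        exact mul_le_of_le_one_right (ha s) (by split_ifs <;> norm_num)
      · rw [Set.indicator_of_notMem (show ω ∉ N s ⁻¹' {1} from h), if_neg fun hs => h hs.1,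
          mul_zero]
  calc ∫ ω, hapaxWeight a (fun s => N s ω) ∂μ
      ≤ ∫ ω, ∑ s, (N s ⁻¹' {1}).indicator (fun _ => a s) ω ∂μ :=
        integral_mono_of_nonneg (ae_of_all _ fun ω => hapaxWeight_nonneg ha _)
          (integrable_finsetSum _ fun s _ => hint s) (ae_of_all _ hle)
    _ = ∑ s, a s * μ.real (N s ⁻¹' {1}) := by
        rw [integral_finsetSum _ fun s _ => hint s]
        simp_rw [integral_indicator_const _ (hN _ (measurableSet_singleton 1)), smul_eq_mul,
          mul_comm]

lemma sum_integral_hapaxWeight_sq_le {κ : Type*} [Fintype κ] {N : ι → κ → Ω → ℕ}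
    (hN : ∀ s j, Measurable (N s j)) {r : ι → κ → ℝ}
    (hr : ∀ s j, μ.real (N s j ⁻¹' {1}) ≤ r s j) (a : ι → ℝ) :
    ∑ j, ∫ ω, hapaxWeight a (fun s => N s j ω) ^ 2 ∂μ ≤ ∑ s, a s ^ 2 * ∑ j, r s j :=
  calc ∑ j, ∫ ω, hapaxWeight a (fun s => N s j ω) ^ 2 ∂μ
      = ∑ j, ∫ ω, hapaxWeight (fun s => a s ^ 2) (fun s => N s j ω) ∂μ := by
        simp_rw [hapaxWeight_comp (f := fun x => x ^ 2) (zero_pow two_ne_zero)]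
    _ ≤ ∑ j, ∑ s, a s ^ 2 * μ.real (N s j ⁻¹' {1}) := Finset.sum_le_sum fun j _ =>
        integral_hapaxWeight_le (fun s => hN s j) fun s => sq_nonneg (a s)
    _ ≤ ∑ j, ∑ s, a s ^ 2 * r s j := by gcongr with j _ s _; exact hr s j
    _ = ∑ s, a s ^ 2 * ∑ j, r s j := by rw [Finset.sum_comm]; simp_rw [Finset.mul_sum]

end Hapax

lemma measureReal_preimage_one_le_of_map_eq_poissonMeasure {Ω : Type*} [MeasurableSpace Ω]
    {μ : Measure Ω} {N : Ω → ℕ} (hN : Measurable N) {r : ℝ≥0}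
    (h : μ.map N = poissonMeasure r) : μ.real (N ⁻¹' {1}) ≤ r := by
  rw [← map_measureReal_apply hN (measurableSet_singleton 1), h, poissonMeasure_real_singleton]
  simpa using mul_le_of_le_one_left r.2 (exp_le_one_iff.2 (neg_nonpos.2 r.2))

theorem good_turing_upper_concentration_general
    {Ω : Type*} [MeasurableSpace Ω] (μ : Measure Ω) [IsProbabilityMeasure μ]
    {J : Type*} [Fintype J] {m : ℕ}
    (lam : J → ℝ) (hlam : ∀ j, 0 < lam j)
    (alph : Fin m → ℝ) (halph : ∀ s, 0 < alph s)
    (N : Fin m → J → Ω → ℕ)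
    (hMeas : ∀ s j, Measurable (N s j))
    (hIndep : iIndepFun (fun q : Fin m × J => N q.1 q.2) μ)
    (hDist : ∀ s j, μ.map (N s j) = poissonMeasure (lam j * alph s).toNNReal)
    (Λ : ℝ) (hΛ : Λ = ∑ j, lam j)
    (a : Fin m → ℝ) (ha : ∀ s, 0 ≤ a s)
    (X : J → Ω → ℝ)
    (hX : ∀ j ω, X j ω =
      ∑ s, a s * (if N s j ω = 1 ∧ ∀ l, l ≠ s → N l j ω = 0 then (1 : ℝ) else 0))
    (G : Ω → ℝ) (hG : ∀ ω, G ω = ∑ j, X j ω)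
    (b v : ℝ) (hb : b = ∑ s, a s) (hv : v = (∑ s, (a s) ^ 2 * alph s) * Λ) :
    iIndepFun X μ ∧
    (∀ j, ∀ᵐ ω ∂μ, 0 ≤ X j ω ∧ X j ω ≤ b) ∧
    (∑ j, ∫ ω, (X j ω) ^ 2 ∂μ ≤ v) ∧
    (∀ δ ∈ Set.Ioo (0 : ℝ) 1,
      μ {ω | G ω - (∫ ω', G ω' ∂μ) >
          Real.sqrt (2 * v * Real.log (1 / δ)) + (b / 3) * Real.log (1 / δ)} ≤
        ENNReal.ofReal δ) := by
  -- `congr!` identifies the `Decidable (∀ l, …)` instances `Nat.decidableForallFin` (in `hX`)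
  -- and `Fintype.decidableForallFintype` (in `hapaxWeight`).
  have hXw (j : J) : X j = fun ω => hapaxWeight a fun s => N s j ω := funext fun ω => by
    rw [hX j ω, hapaxWeight]
    congr!
  have hXmeas (j : J) : Measurable (X j) :=
    hXw j ▸ (measurable_of_countable (hapaxWeight a)).comp
      (measurable_pi_lambda _ fun s => hMeas s j)
  have hindep : iIndepFun X μ := by
    have hcols := (hIndep.precomp (g := Prod.swap) Prod.swap_injective).curry fun j s => hMeas s j
    rw [funext hXw]
    exact hcols.comp (fun _ => hapaxWeight a) fun _ => measurable_of_countable _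
  have hbound (j : J) : ∀ᵐ ω ∂μ, 0 ≤ X j ω ∧ X j ω ≤ b := ae_of_all _ fun ω => by
    rw [hXw j, hb]; exact ⟨hapaxWeight_nonneg ha _, hapaxWeight_le_sum ha _⟩
  have hpois (s : Fin m) (j : J) : μ.real (N s j ⁻¹' {1}) ≤ lam j * alph s := by
    simpa [(mul_pos (hlam j) (halph s)).le] using
      measureReal_preimage_one_le_of_map_eq_poissonMeasure (hMeas s j) (hDist s j)
  have hvar : ∑ j, ∫ ω, X j ω ^ 2 ∂μ ≤ v := by
    simp_rw [hXw]
    refine (sum_integral_hapaxWeight_sq_le hMeas hpois a).trans_eq ?_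
    rw [hv, hΛ, Finset.sum_mul]
    exact Finset.sum_congr rfl fun s _ => by rw [← Finset.sum_mul]; ring
  refine ⟨hindep, hbound, hvar, fun δ ⟨hδ0, hδ1⟩ => ?_⟩
  have hconc := measure_sum_sub_integral_gt_le hindep hXmeas
    (hb ▸ Finset.sum_nonneg fun s _ => ha s) hbound hvar (log_pos (one_lt_one_div hδ0 hδ1))
  rw [show exp (-log (1 / δ)) = δ by rw [one_div, log_inv, neg_neg, exp_log hδ0]] at hconc
  rwa [show G = fun ω => ∑ j, X j ω from funext hG]

/-- independence, boundedness, variance bound and Bernstein-type upper-tail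
concentration for the Good–Turing statistic. -/
theorem good_turing_upper_concentration
    {Ω : Type*} [MeasurableSpace Ω] (μ : Measure Ω) [IsProbabilityMeasure μ]
    {J : Type*} [Fintype J] {m : ℕ}
    (lam : J → ℝ) (hlam : ∀ j, 0 < lam j)
    (alph : Fin m → ℝ) (halph : ∀ s, 0 < alph s)
    (N : Fin m → J → Ω → ℕ)
    (hMeas : ∀ s j, Measurable (N s j))
    (hIndep : iIndepFun (fun q : Fin m × J => N q.1 q.2) μ)
    (hDist : ∀ s j, μ.map (N s j) = poissonMeasure (lam j * alph s).toNNReal)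
    (A Λ : ℝ) (hA : A = ∑ s, alph s) (hΛ : Λ = ∑ j, lam j)
    (a : Fin m → ℝ) (ha : ∀ s, 0 ≤ a s)
    (X : J → Ω → ℝ)
    (hX : ∀ j ω, X j ω =
      ∑ s, a s * (if N s j ω = 1 ∧ ∀ l, l ≠ s → N l j ω = 0 then (1 : ℝ) else 0))
    (G : Ω → ℝ) (hG : ∀ ω, G ω = ∑ j, X j ω)
    (b v : ℝ) (hb : b = ∑ s, a s) (hv : v = (∑ s, (a s) ^ 2 * alph s) * Λ) :
    iIndepFun X μ ∧
    (∀ j, ∀ᵐ ω ∂μ, 0 ≤ X j ω ∧ X j ω ≤ b) ∧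
    (∑ j, ∫ ω, (X j ω) ^ 2 ∂μ ≤ v) ∧
    (∀ δ ∈ Set.Ioo (0 : ℝ) 1,
      μ {ω | G ω - (∫ ω', G ω' ∂μ) >
          Real.sqrt (2 * v * Real.log (1 / δ)) + (b / 3) * Real.log (1 / δ)} ≤
        ENNReal.ofReal δ) :=
  good_turing_upper_concentration_general μ lam hlam alph halph N hMeas hIndep hDist Λ hΛ a ha X hX
    G hG b v hb hv
end
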